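/- arXiv:math/0606003 — 2 statements merged into one kernel-verified Lean document; each statement's English description precedes it below -/
import Mathlib

section
/- For any nonzero integer D, the set of integer solutions (u,v) to u^3 + v^3 = D is finite. -/
/-! Since `u³ + v³ = (u + v)(u² - uv + v²)`, the positive definite form `u² - uv + v²` divides
the nonzero integer `D`, hence is at most `|D|`. As `u² + v² ≤ 2(u² - uv + v²)`, both `|u|` and
`|v|` are then bounded by `2|D|`. -/

theorem sq_add_sq_le_two_mul_sq_sub_mul_add_sq {R : Type*} [CommRing R] [LinearOrder R]
    [IsStrictOrderedRing R] (u v : R) :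
    u ^ 2 + v ^ 2 ≤ 2 * (u ^ 2 - u * v + v ^ 2) := by
  nlinarith [sq_nonneg (u - v)]

theorem sq_sub_mul_add_sq_dvd_pow_three_add_pow_three {R : Type*} [CommRing R] (u v : R) :
    u ^ 2 - u * v + v ^ 2 ∣ u ^ 3 + v ^ 3 :=
  ⟨u + v, by ring⟩

theorem Int.abs_le_two_mul_abs_of_pow_three_add_pow_three_eq {u v D : ℤ} (hD : D ≠ 0)
    (h : u ^ 3 + v ^ 3 = D) : |u| ≤ 2 * |D| ∧ |v| ≤ 2 * |D| := by
  have hform : u ^ 2 - u * v + v ^ 2 ≤ |D| :=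
    Int.le_of_dvd (abs_pos.mpr hD)
      ((dvd_abs _ _).mpr (h ▸ sq_sub_mul_add_sq_dvd_pow_three_add_pow_three u v))
  have hsum : u ^ 2 + v ^ 2 ≤ 2 * |D| :=
    (sq_add_sq_le_two_mul_sq_sub_mul_add_sq u v).trans (by linarith)
  have hu : |u| ≤ u ^ 2 := Int.abs_eq_natAbs u ▸ Int.natAbs_le_self_sq u
  have hv : |v| ≤ v ^ 2 := Int.abs_eq_natAbs v ▸ Int.natAbs_le_self_sq v
  constructor <;> linarith [sq_nonneg u, sq_nonneg v]

theorem cube_sum_finite (D : ℤ) (hD : D ≠ 0) :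
    {p : ℤ × ℤ | p.1 ^ 3 + p.2 ^ 3 = D}.Finite := by
  refine ((Set.finite_Icc (-(2 * |D|)) (2 * |D|)).prod
    (Set.finite_Icc (-(2 * |D|)) (2 * |D|))).subset ?_
  rintro ⟨u, v⟩ h
  obtain ⟨hu, hv⟩ := Int.abs_le_two_mul_abs_of_pow_three_add_pow_three_eq hD h
  exact ⟨abs_le.mp hu, abs_le.mp hv⟩
end

section
/- For integers c, d not both zero, the cubic polynomial (c+d)X^3 + (3c-6d)X^2 + (3d-6c)X + (c+d) has no repeated complex roots (equivalently, it is separable as a polynomial over ℚ, when it is nonconstant). -/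
/-!
A double root `z` is a common root of the cubic and its derivative. Because the cubic is
palindromic, its discriminant `729 (c² - cd + d²)²` is an explicit combination of `p(z)` and
`p'(z)`, so it vanishes; but `c² - cd + d²` is a positive definite form.
-/

open Polynomial

theorem Polynomial.isRoot_and_isRoot_derivative_of_sq_dvd {R : Type*} [CommRing R] {p : R[X]}
    {z : R} (h : (X - C z) ^ 2 ∣ p) : p.IsRoot z ∧ (derivative p).IsRoot z :=
  ⟨dvd_iff_isRoot.mp ((dvd_pow_self _ two_ne_zero).trans h),
    dvd_iff_isRoot.mp (by simpa using pow_sub_one_dvd_derivative_of_pow_dvd h)⟩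

namespace Cubic

variable {R : Type*} [CommRing R]

-- For `d = a` the discriminant itself, not only `a` times it (the resultant of `P` and `P'`),
-- is a combination of `P(z)` and `P'(z)`.
theorem discr_eq_zero_of_isRoot_of_isRoot_derivative {P : Cubic R} (hda : P.d = P.a) {z : R}
    (hroot : P.toPoly.IsRoot z) (hroot' : (derivative P.toPoly).IsRoot z) : P.discr = 0 := by
  obtain ⟨a, b, e, d⟩ := P
  dsimp only at hda
  subst d
  have h₀ : a * z ^ 3 + b * z ^ 2 + e * z + a = 0 := by simpa [toPoly] using hroot
  have h₁ : 3 * a * z ^ 2 + 2 * b * z + e = 0 := by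
    simp [toPoly] at hroot'
    linear_combination hroot'
  simp only [discr]
  linear_combination
    (-(3 * (2 * a * b ^ 2 - 6 * a ^ 2 * e) * z + (27 * a ^ 3 + 4 * b ^ 3 - 15 * a * b * e))) * h₀
    - ((6 * a ^ 2 * e - 2 * a * b ^ 2) * z ^ 2 + (7 * a * b * e - 9 * a ^ 3 - 2 * b ^ 3) * z
      + (4 * a * e ^ 2 - b ^ 2 * e - 3 * a ^ 2 * b)) * h₁

end Cubic

def familyCubic {R : Type*} [CommRing R] (c d : R) : Cubic R :=
  ⟨c + d, 3 * c - 6 * d, 3 * d - 6 * c, c + d⟩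

theorem familyCubic_discr {R : Type*} [CommRing R] (c d : R) :
    (familyCubic c d).discr = 729 * (c ^ 2 - c * d + d ^ 2) ^ 2 := by
  simp only [familyCubic, Cubic.discr]
  ring

theorem eq_zero_and_eq_zero_of_sq_sub_mul_add_sq_eq_zero {R : Type*} [CommRing R] [LinearOrder R]
    [IsStrictOrderedRing R] {c d : R} (h : c ^ 2 - c * d + d ^ 2 = 0) : c = 0 ∧ d = 0 := by
  have hc : c ^ 2 = 0 := by nlinarith [sq_nonneg (c - d), sq_nonneg c, sq_nonneg d]
  have hd : d ^ 2 = 0 := by nlinarith [sq_nonneg (c - d), sq_nonneg c, sq_nonneg d]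
  exact ⟨pow_eq_zero_iff two_ne_zero |>.mp hc, pow_eq_zero_iff two_ne_zero |>.mp hd⟩

open Polynomial in
theorem cubic_no_repeated_roots (c d : ℤ) (h : ¬(c = 0 ∧ d = 0)) :
    ∀ z : ℂ, ¬((X - C z) ^ 2 ∣
      (C ((c : ℂ) + d) * X ^ 3 + C (3 * (c : ℂ) - 6 * d) * X ^ 2
        + C (3 * (d : ℂ) - 6 * c) * X + C ((c : ℂ) + d))) := by
  intro z hdvd
  obtain ⟨hroot, hroot'⟩ := isRoot_and_isRoot_derivative_of_sq_dvd hdvd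
  have hdiscr : (familyCubic (c : ℂ) d).discr = 0 :=
    Cubic.discr_eq_zero_of_isRoot_of_isRoot_derivative rfl hroot hroot'
  rw [familyCubic_discr, mul_eq_zero, pow_eq_zero_iff two_ne_zero] at hdiscr
  have hcd : c ^ 2 - c * d + d ^ 2 = 0 := by
    exact_mod_cast hdiscr.resolve_left (by norm_num)
  exact h (eq_zero_and_eq_zero_of_sq_sub_mul_add_sq_eq_zero hcd)
end
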